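/- With a² + r² = 1, r > 0, 0 < a < 1, w = 1/r, the curve I(γ)(s) = ( (r/2)[ sin(w(a+1)s)/(w(a+1)) + sin(w(a−1)s)/(w(a−1)) ], (r/2)[ −cos(w(a+1)s)/(w(a+1)) + cos(w(a−1)s)/(w(a−1)) ], r·sin(aws) ) satisfies ‖I(γ)(s)‖ = 1 for all s ∈ ℝ, i.e. it lies on the unit sphere. -/

import Mathlib

/-!
Write `k = w(a+1)` and `m = w(a-1)`. The relation `a² + r² = 1` with `w = 1/r` says exactly
`k m = -1`, so the horizontal part `(sin ks/k + sin ms/m, -cos ks/k + cos ms/m)` has squared length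
`k² + m² + 2 cos((k+m)s) = 2(1+a²)/r² + 2 cos(2aws)`. Scaled by `r²/4` this is
`(1+a²)/2 + (r²/2) cos(2aws) = 1 - r² sin²(aws)`, which the vertical coordinate `r sin(aws)` makes up.
-/

noncomputable def vec3 (x y z : ℝ) : EuclideanSpace ℝ (Fin 3) := WithLp.toLp 2 ![x, y, z]

lemma norm_vec3 (x y z : ℝ) : ‖vec3 x y z‖ = √(x ^ 2 + y ^ 2 + z ^ 2) := by
  simp only [vec3, EuclideanSpace.norm_eq, Fin.sum_univ_three, Real.norm_eq_abs, sq_abs,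
    Matrix.cons_val_zero, Matrix.cons_val_one, Matrix.cons_val_two, Matrix.head_cons,
    Matrix.tail_cons]

-- The left side is `|e^{iks}/k - e^{-ims}/m|²`.
lemma sin_div_add_sin_div_sq_add_cos_div_sq (k m s : ℝ) :
    (Real.sin (k * s) / k + Real.sin (m * s) / m) ^ 2
      + (-Real.cos (k * s) / k + Real.cos (m * s) / m) ^ 2
      = k⁻¹ ^ 2 + m⁻¹ ^ 2 - 2 * k⁻¹ * m⁻¹ * Real.cos ((k + m) * s) := by
  rw [add_mul, Real.cos_add]
  linear_combination k⁻¹ ^ 2 * Real.sin_sq_add_cos_sq (k * s)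
    + m⁻¹ ^ 2 * Real.sin_sq_add_cos_sq (m * s)

lemma sin_div_add_sin_div_sq_add_cos_div_sq_of_mul_eq_neg_one {k m : ℝ} (hkm : k * m = -1)
    (s : ℝ) :
    (Real.sin (k * s) / k + Real.sin (m * s) / m) ^ 2
      + (-Real.cos (k * s) / k + Real.cos (m * s) / m) ^ 2
      = k ^ 2 + m ^ 2 + 2 * Real.cos ((k + m) * s) := by
  have hk : k⁻¹ = -m := inv_eq_of_mul_eq_one_right (by linear_combination -hkm)
  have hm : m⁻¹ = -k := inv_eq_of_mul_eq_one_right (by linear_combination -hkm)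
  rw [sin_div_add_sin_div_sq_add_cos_div_sq, hk, hm]
  linear_combination (-2 * Real.cos ((k + m) * s)) * hkm

theorem stmt_7 (a r w : ℝ) (hr : 0 < r) (hw : w = 1 / r)
    (h1 : a ^ 2 + r ^ 2 = 1)
    (Iγ : ℝ → EuclideanSpace ℝ (Fin 3))
    (hIγ : ∀ s, Iγ s = vec3
      (r / 2 * (Real.sin (w * (a + 1) * s) / (w * (a + 1))
        + Real.sin (w * (a - 1) * s) / (w * (a - 1))))
      (r / 2 * (-Real.cos (w * (a + 1) * s) / (w * (a + 1))
        + Real.cos (w * (a - 1) * s) / (w * (a - 1))))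
      (r * Real.sin (a * w * s))) :
    ∀ s : ℝ, ‖Iγ s‖ = 1 := by
  intro s
  have hwr : w * r = 1 := by rw [hw, one_div, inv_mul_cancel₀ hr.ne']
  have hkm : w * (a + 1) * (w * (a - 1)) = -1 := by
    linear_combination w ^ 2 * h1 - (w * r + 1) * hwr
  have hplanar := sin_div_add_sin_div_sq_add_cos_div_sq_of_mul_eq_neg_one hkm s
  have harg : (w * (a + 1) + w * (a - 1)) * s = 2 * (a * w * s) := by ring
  rw [harg, Real.cos_two_mul, Real.cos_sq'] at hplanar
  rw [hIγ, norm_vec3, Real.sqrt_eq_one]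
  linear_combination (r ^ 2 / 4) * hplanar + (1 + a ^ 2) / 2 * (w * r + 1) * hwr + h1 / 2
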